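/- For every ψ ∈ (0, π/2) and n ∈ ℤ, the Fourier coefficient g_n(ψ) of the attenuated V-line transform satisfies g_n(ψ) = 2 e^{−μR cos ψ} ∫_{R sin ψ}^R f_n(r) · r K_n(R sin ψ, r)/√(r² − R² sin² ψ) dr, where K_n(s,r) := Σ_{σ=±1} σⁿ e^{σμ√(r²−s²)} cos( n( arcsin(s/r) − σ arcsin(s/R) ) ). -/

import Mathlib

open Real MeasureTheory

/-- `Φ(α) = (cos α, sin α)`. -/
noncomputable def Phi (α : ℝ) : ℝ × ℝ := (Real.cos α, Real.sin α)

/-- The attenuated V-line transform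
`(V_μ f)(φ, ψ) = Σ_{σ = ±1} ∫₀^∞ f(RΦ(φ) − rΦ(φ − σψ)) e^{−μ r} dr`. -/
noncomputable def Vline (R μ : ℝ) (f : ℝ × ℝ → ℝ) (φ ψ : ℝ) : ℝ :=
  (∫ r in Set.Ioi (0 : ℝ), f (R • Phi φ - r • Phi (φ - ψ)) * Real.exp (-μ * r)) +
  (∫ r in Set.Ioi (0 : ℝ), f (R • Phi φ - r • Phi (φ + ψ)) * Real.exp (-μ * r))

/-- `f_n(r) = (1/2π) ∫₀^{2π} f(rΦ(φ)) e^{−i n φ} dφ`. -/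
noncomputable def angCoeff (f : ℝ × ℝ → ℝ) (n : ℤ) (r : ℝ) : ℂ :=
  (1 / (2 * (π : ℂ))) *
    ∫ φ in (0 : ℝ)..(2 * π), (f (r • Phi φ) : ℂ) * Complex.exp (-Complex.I * n * φ)

/-- `g_n(ψ) = (1/2π) ∫₀^{2π} (V_μ f)(φ, ψ) e^{−i n φ} dφ`. -/
noncomputable def VlineCoeff (R μ : ℝ) (f : ℝ × ℝ → ℝ) (n : ℤ) (ψ : ℝ) : ℂ :=
  (1 / (2 * (π : ℂ))) *
    ∫ φ in (0 : ℝ)..(2 * π), (Vline R μ f φ ψ : ℂ) * Complex.exp (-Complex.I * n * φ)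

/-- The kernel `K_n(s, r) = Σ_{σ=±1} σⁿ e^{σμ√(r²−s²)} cos(n(arcsin(s/r) − σ arcsin(s/R)))`. -/
noncomputable def Kker (R μ : ℝ) (n : ℤ) (s r : ℝ) : ℝ :=
  ∑ σ ∈ ({1, -1} : Finset ℝ),
    σ ^ n * Real.exp (σ * μ * Real.sqrt (r ^ 2 - s ^ 2)) *
      Real.cos (n * (Real.arcsin (s / r) - σ * Real.arcsin (s / R)))

noncomputable def rho2 (R ψ r : ℝ) : ℝ :=
  Real.sqrt ((r - R * Real.cos ψ) ^ 2 + (R * Real.sin ψ) ^ 2)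

noncomputable def cAng (R ψ r : ℝ) : ℝ :=
  if r ≤ R * Real.cos ψ then Real.arcsin ((R * Real.sin ψ) / rho2 R ψ r) - ψ
  else π - Real.arcsin ((R * Real.sin ψ) / rho2 R ψ r) - ψ

lemma rho2_sq (R ψ r : ℝ) :
    (rho2 R ψ r) ^ 2 = (r - R * Real.cos ψ) ^ 2 + (R * Real.sin ψ) ^ 2 :=
  Real.sq_sqrt (by positivity)

lemma rho2_nonneg (R ψ r : ℝ) : 0 ≤ rho2 R ψ r := Real.sqrt_nonneg _

lemma s_le_rho2 (R ψ r : ℝ) (hs : 0 ≤ R * Real.sin ψ) : R * Real.sin ψ ≤ rho2 R ψ r :=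
  Real.le_sqrt_of_sq_le (by nlinarith [sq_nonneg (r - R * Real.cos ψ)])

lemma rho2_pos (R ψ r : ℝ) (hs : 0 < R * Real.sin ψ) : 0 < rho2 R ψ r :=
  lt_of_lt_of_le hs (s_le_rho2 R ψ r hs.le)

lemma sqrt_rho2_sq_sub (R ψ r : ℝ) :
    Real.sqrt ((rho2 R ψ r) ^ 2 - (R * Real.sin ψ) ^ 2) = |r - R * Real.cos ψ| := by
  rw [rho2_sq]; rw [show (r - R * Real.cos ψ) ^ 2 + (R * Real.sin ψ) ^ 2 - (R * Real.sin ψ) ^ 2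
      = (r - R * Real.cos ψ) ^ 2 by ring, Real.sqrt_sq_eq_abs]

lemma cAng_cos_sin (R ψ r : ℝ) (hR : 0 < R) (hψ1 : 0 < ψ) (hψ2 : ψ < π / 2) :
    rho2 R ψ r * Real.cos (cAng R ψ r) = R - r * Real.cos ψ ∧
    rho2 R ψ r * Real.sin (cAng R ψ r) = r * Real.sin ψ := by
  have hsin : 0 < Real.sin ψ := Real.sin_pos_of_pos_of_lt_pi hψ1 (by linarith [Real.pi_gt_three])
  have hs : 0 < R * Real.sin ψ := by positivity
  set ρ := rho2 R ψ r with hρdef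
  have hρpos : 0 < ρ := rho2_pos R ψ r hs
  have hρsq : ρ ^ 2 = (r - R * Real.cos ψ) ^ 2 + (R * Real.sin ψ) ^ 2 := rho2_sq R ψ r
  have hsle : R * Real.sin ψ ≤ ρ := s_le_rho2 R ψ r hs.le
  have hratio1 : R * Real.sin ψ / ρ ≤ 1 := by rw [div_le_one hρpos]; exact hsle
  have hratio0 : 0 ≤ R * Real.sin ψ / ρ := by positivity
  have hsA' : ρ * Real.sin (Real.arcsin (R * Real.sin ψ / ρ)) = R * Real.sin ψ := by
    rw [Real.sin_arcsin (by linarith) hratio1]; field_simp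
  have hcA' : ρ * Real.cos (Real.arcsin (R * Real.sin ψ / ρ)) = |r - R * Real.cos ψ| := by
    rw [Real.cos_arcsin]
    have h1 : 1 - (R * Real.sin ψ / ρ) ^ 2 = (|r - R * Real.cos ψ| / ρ) ^ 2 := by
      rw [div_pow, div_pow, sq_abs]; field_simp; nlinarith [hρsq]
    rw [h1, Real.sqrt_sq (by positivity)]; field_simp
  have hpyth : Real.sin ψ ^ 2 + Real.cos ψ ^ 2 = 1 := Real.sin_sq_add_cos_sq ψ
  by_cases hbr : r ≤ R * Real.cos ψ
  · have habs : |r - R * Real.cos ψ| = R * Real.cos ψ - r := by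
      rw [abs_of_nonpos (by linarith)]; ring
    rw [habs] at hcA'
    rw [cAng, if_pos hbr, Real.cos_sub, Real.sin_sub]
    constructor
    · linear_combination Real.cos ψ * hcA' + Real.sin ψ * hsA' + R * hpyth
    · linear_combination Real.cos ψ * hsA' - Real.sin ψ * hcA'
  · push_neg at hbr
    have habs : |r - R * Real.cos ψ| = r - R * Real.cos ψ := abs_of_pos (by linarith)
    rw [habs] at hcA'
    have h1 : π - Real.arcsin (R * Real.sin ψ / ρ) - ψ
        = π - (Real.arcsin (R * Real.sin ψ / ρ) + ψ) := by ring
    rw [cAng, if_neg (not_le.2 hbr), h1, Real.cos_pi_sub, Real.sin_pi_sub,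
      Real.cos_add, Real.sin_add]
    constructor
    · linear_combination (-Real.cos ψ) * hcA' + Real.sin ψ * hsA' + R * hpyth
    · linear_combination Real.cos ψ * hsA' + Real.sin ψ * hcA'

/-- the vector identities -/
lemma point_eq_pos (R ψ r φ : ℝ) (hR : 0 < R) (hψ1 : 0 < ψ) (hψ2 : ψ < π / 2) :
    R • Phi φ - r • Phi (φ - ψ) = rho2 R ψ r • Phi (φ + cAng R ψ r) := by
  obtain ⟨h1, h2⟩ := cAng_cos_sin R ψ r hR hψ1 hψ2
  have e1 : Real.cos (φ + cAng R ψ r)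
      = Real.cos φ * Real.cos (cAng R ψ r) - Real.sin φ * Real.sin (cAng R ψ r) :=
    Real.cos_add φ _
  have e2 : Real.sin (φ + cAng R ψ r)
      = Real.sin φ * Real.cos (cAng R ψ r) + Real.cos φ * Real.sin (cAng R ψ r) :=
    Real.sin_add φ _
  have e3 := Real.cos_sub φ ψ
  have e4 := Real.sin_sub φ ψ
  ext
  · simp only [Phi, Prod.smul_fst, Prod.fst_sub, smul_eq_mul]
    rw [e1, e3]
    linear_combination (-Real.cos φ) * h1 + Real.sin φ * h2
  · simp only [Phi, Prod.smul_snd, Prod.snd_sub, smul_eq_mul]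
    rw [e2, e4]
    linear_combination (-Real.sin φ) * h1 + (-Real.cos φ) * h2

lemma point_eq_neg (R ψ r φ : ℝ) (hR : 0 < R) (hψ1 : 0 < ψ) (hψ2 : ψ < π / 2) :
    R • Phi φ - r • Phi (φ + ψ) = rho2 R ψ r • Phi (φ + -cAng R ψ r) := by
  obtain ⟨h1, h2⟩ := cAng_cos_sin R ψ r hR hψ1 hψ2
  have e1 : Real.cos (φ + -cAng R ψ r)
      = Real.cos φ * Real.cos (cAng R ψ r) + Real.sin φ * Real.sin (cAng R ψ r) := by
    rw [Real.cos_add, Real.cos_neg, Real.sin_neg]; ring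
  have e2 : Real.sin (φ + -cAng R ψ r)
      = Real.sin φ * Real.cos (cAng R ψ r) - Real.cos φ * Real.sin (cAng R ψ r) := by
    rw [Real.sin_add, Real.cos_neg, Real.sin_neg]; ring
  have e3 := Real.cos_add φ ψ
  have e4 := Real.sin_add φ ψ
  ext
  · simp only [Phi, Prod.smul_fst, Prod.fst_sub, smul_eq_mul]
    rw [e1, e3]
    linear_combination (-Real.cos φ) * h1 + (-Real.sin φ) * h2
  · simp only [Phi, Prod.smul_snd, Prod.snd_sub, smul_eq_mul]
    rw [e2, e4]
    linear_combination (-Real.sin φ) * h1 + Real.cos φ * h2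

lemma normsq_point (R r α β : ℝ) :
    (R • Phi α - r • Phi β).1 ^ 2 + (R • Phi α - r • Phi β).2 ^ 2
      = R ^ 2 + r ^ 2 - 2 * R * r * Real.cos (α - β) := by
  simp only [Phi, Prod.smul_fst, Prod.smul_snd, Prod.fst_sub, Prod.snd_sub, smul_eq_mul]
  rw [Real.cos_sub]
  linear_combination (R^2) * Real.sin_sq_add_cos_sq α + (r^2) * Real.sin_sq_add_cos_sq β

section Supp
variable {R : ℝ} {f : ℝ × ℝ → ℝ}

lemma f_vanish (hsupp : tsupport f ⊆ {x : ℝ × ℝ | x.1 ^ 2 + x.2 ^ 2 < R ^ 2})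
    {x : ℝ × ℝ} (hx : R ^ 2 ≤ x.1 ^ 2 + x.2 ^ 2) : f x = 0 := by
  by_contra h
  have := hsupp (subset_tsupport f h)
  simp only [Set.mem_setOf_eq] at this
  linarith

lemma f_hcs (hR : 0 < R) (hsupp : tsupport f ⊆ {x : ℝ × ℝ | x.1 ^ 2 + x.2 ^ 2 < R ^ 2}) :
    HasCompactSupport f := by
  have hsub : tsupport f ⊆ Metric.closedBall (0 : ℝ × ℝ) R := by
    intro x hx
    have hx2 := hsupp hx
    simp only [Set.mem_setOf_eq] at hx2
    have h1 : |x.1| ≤ R := by nlinarith [sq_nonneg x.1, sq_nonneg x.2, abs_nonneg x.1, sq_abs x.1, sq_abs x.2]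
    have h2 : |x.2| ≤ R := by nlinarith [sq_nonneg x.1, sq_nonneg x.2, abs_nonneg x.2, sq_abs x.1, sq_abs x.2]
    simp only [Metric.mem_closedBall, Prod.dist_eq, dist_zero_right, Real.norm_eq_abs]
    exact max_le h1 h2
  exact HasCompactSupport.intro (isCompact_closedBall _ _) fun x hx =>
    image_eq_zero_of_notMem_tsupport (fun hc => hx (hsub hc))

lemma f_bound (hR : 0 < R) (hfc : Continuous f)
    (hsupp : tsupport f ⊆ {x : ℝ × ℝ | x.1 ^ 2 + x.2 ^ 2 < R ^ 2}) :
    ∃ C : ℝ, 0 ≤ C ∧ ∀ x, |f x| ≤ C := by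
  obtain ⟨C, hC⟩ := (f_hcs hR hsupp).exists_bound_of_continuous hfc
  exact ⟨C, le_trans (norm_nonneg (f 0)) (hC 0), fun x => hC x⟩

end Supp

/-- Evaluation of the angular integral after rotation. -/
lemma inner_eval (f : ℝ × ℝ → ℝ) (n : ℤ) (R μ ε r ρ₀ a : ℝ)
    (hpt : ∀ φ : ℝ, R • Phi φ - r • Phi (φ - ε) = ρ₀ • Phi (φ + a)) :
    (∫ φ in Set.Ioc (0:ℝ) (2*π),
      ((f (R • Phi φ - r • Phi (φ - ε)) * Real.exp (-μ*r) : ℝ) : ℂ) * Complex.exp (-Complex.I*n*φ))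
    = Complex.exp (Complex.I*n*a) * (2*π*angCoeff f n ρ₀) * ((Real.exp (-μ*r) : ℝ) : ℂ) := by
  have h2π : (0:ℝ) ≤ 2*π := by positivity
  rw [← intervalIntegral.integral_of_le h2π]
  set H : ℝ → ℂ := fun θ => (f (ρ₀ • Phi θ) : ℂ) * Complex.exp (-Complex.I*n*θ) with hH
  have key : ∀ φ : ℝ, ((f (R • Phi φ - r • Phi (φ - ε)) * Real.exp (-μ*r) : ℝ) : ℂ)
        * Complex.exp (-Complex.I*n*φ)
      = H (φ + a) * (Complex.exp (Complex.I*n*a) * ((Real.exp (-μ*r) : ℝ) : ℂ)) := by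
    intro φ
    rw [hpt φ, hH]
    have hexp : Complex.exp (-Complex.I*n*(↑(φ+a))) * Complex.exp (Complex.I*n*a)
        = Complex.exp (-Complex.I*n*φ) := by
      rw [← Complex.exp_add]; congr 1; push_cast; ring
    simp only []
    rw [← hexp]
    push_cast
    ring
  rw [intervalIntegral.integral_congr (fun φ _ => key φ)]
  rw [intervalIntegral.integral_mul_const]
  rw [intervalIntegral.integral_comp_add_right H a]
  have hper : Function.Periodic H (2*π) := by
    intro θ
    have hPhi : Phi (θ + 2*π) = Phi θ := by
      simp [Phi, Real.cos_add_two_pi, Real.sin_add_two_pi]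
    have hexp : Complex.exp (-Complex.I*n*(↑(θ+2*π))) = Complex.exp (-Complex.I*n*θ) := by
      rw [show (-Complex.I*(n:ℂ)*(↑(θ+2*π)):ℂ) = -Complex.I*n*θ + ((-n : ℤ) : ℂ) * (2*π*Complex.I) by
        push_cast; ring, Complex.exp_add, Complex.exp_int_mul_two_pi_mul_I, mul_one]
    simp only [hH]
    rw [hPhi, hexp]
  have hshift := hper.intervalIntegral_add_eq a 0
  rw [zero_add] at hshift
  rw [show (0:ℝ) + a = a by ring, show 2*π + a = a + 2*π by ring, hshift]
  have hπ : (π:ℂ) ≠ 0 := by exact_mod_cast Real.pi_ne_zero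
  rw [angCoeff]
  field_simp
  ring
  rw [hH]; simp only [neg_mul]

lemma continuous_Phi : Continuous Phi := Real.continuous_cos.prodMk Real.continuous_sin

lemma norm_exp_neg_I_mul (n : ℤ) (x : ℝ) : ‖Complex.exp (-Complex.I * n * x)‖ = 1 := by
  rw [show (-Complex.I * (n:ℂ) * (x:ℝ) : ℂ) = ((-(n * x) : ℝ) : ℂ) * Complex.I by push_cast; ring]
  exact Complex.norm_exp_ofReal_mul_I _

lemma F_integrable (R μ : ℝ) (hR : 0 < R) (f : ℝ × ℝ → ℝ) (hfc : Continuous f)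
    {C : ℝ} (hC0 : 0 ≤ C) (hC : ∀ x, |f x| ≤ C)
    (hvan : ∀ x : ℝ × ℝ, R ^ 2 ≤ x.1 ^ 2 + x.2 ^ 2 → f x = 0) (n : ℤ) (ε : ℝ) :
    Integrable
      (fun p : ℝ × ℝ =>
        ((f (R • Phi p.1 - p.2 • Phi (p.1 - ε)) * Real.exp (-μ * p.2) : ℝ) : ℂ)
          * Complex.exp (-Complex.I * n * p.1))
      ((volume.restrict (Set.Ioc 0 (2*π))).prod (volume.restrict (Set.Ioi 0))) := by
  set M : ℝ := C * Real.exp (|μ| * (2*R)) with hM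
  have hM0 : 0 ≤ M := by positivity
  have hbound : Integrable
      (fun p : ℝ × ℝ => M * Set.indicator (Set.Ioc (0:ℝ) (2*R)) (fun _ => (1:ℝ)) p.2)
      ((volume.restrict (Set.Ioc 0 (2*π))).prod (volume.restrict (Set.Ioi 0))) := by
    apply Integrable.mul_prod (f := fun _ : ℝ => M)
      (g := fun r : ℝ => Set.indicator (Set.Ioc (0:ℝ) (2*R)) (fun _ => (1:ℝ)) r)
    · exact integrableOn_const measure_Ioc_lt_top.ne
    · rw [integrable_indicator_iff measurableSet_Ioc]
      refine integrableOn_const (LT.lt.ne ?_)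
      rw [Measure.restrict_apply measurableSet_Ioc]
      exact lt_of_le_of_lt (measure_mono Set.inter_subset_left) measure_Ioc_lt_top
  have hcont : Continuous (fun p : ℝ × ℝ =>
      ((f (R • Phi p.1 - p.2 • Phi (p.1 - ε)) * Real.exp (-μ * p.2) : ℝ) : ℂ)
        * Complex.exp (-Complex.I * n * p.1)) := by
    apply Continuous.mul
    · apply Complex.continuous_ofReal.comp
      apply Continuous.mul
      · exact hfc.comp ((continuous_const.fun_smul (continuous_Phi.comp' continuous_fst)).fun_sub
          (continuous_snd.fun_smul (continuous_Phi.comp' (continuous_fst.fun_sub continuous_const))))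
      · exact Real.continuous_exp.comp (continuous_const.mul continuous_snd)
    · exact Complex.continuous_exp.comp ((continuous_const.mul continuous_const).mul
        (Complex.continuous_ofReal.comp continuous_fst))
  refine Integrable.mono' hbound hcont.aestronglyMeasurable ?_
  rw [Measure.prod_restrict]
  filter_upwards [ae_restrict_mem (measurableSet_Ioc.prod measurableSet_Ioi)] with p hp
  obtain ⟨hp1, hp2⟩ := hp
  simp only [Set.mem_Ioi] at hp2
  rw [norm_mul, norm_exp_neg_I_mul, mul_one, Complex.norm_real, Real.norm_eq_abs, abs_mul,
    abs_of_pos (Real.exp_pos _)]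
  by_cases h2R : p.2 ≤ 2*R
  · rw [Set.indicator_of_mem (Set.mem_Ioc.2 ⟨hp2, h2R⟩), mul_one]
    have he : Real.exp (-μ * p.2) ≤ Real.exp (|μ| * (2*R)) := by
      apply Real.exp_le_exp.2
      have h1 : -μ * p.2 ≤ |μ| * p.2 := by nlinarith [neg_abs_le μ, abs_nonneg μ]
      have h2 : |μ| * p.2 ≤ |μ| * (2*R) := by nlinarith [abs_nonneg μ]
      linarith
    calc |f _| * Real.exp (-μ * p.2) ≤ C * Real.exp (|μ| * (2*R)) :=
          mul_le_mul (hC _) he (Real.exp_pos _).le hC0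
      _ = M := rfl
  · push_neg at h2R
    rw [Set.indicator_of_notMem (by simp [Set.mem_Ioc]; intro _; linarith), mul_zero]
    have hx : R ^ 2 ≤ (R • Phi p.1 - p.2 • Phi (p.1 - ε)).1 ^ 2
        + (R • Phi p.1 - p.2 • Phi (p.1 - ε)).2 ^ 2 := by
      rw [normsq_point]
      nlinarith [mul_pos hp2 (show (0:ℝ) < p.2 - 2*R by linarith),
        mul_nonneg (mul_nonneg (show (0:ℝ) ≤ 2*R by linarith) hp2.le)
          (show (0:ℝ) ≤ 1 - Real.cos (p.1 - (p.1 - ε)) by linarith [Real.cos_le_one (p.1 - (p.1 - ε))])]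
    rw [hvan _ hx]
    simp


lemma Vline_repr (R μ : ℝ) (hR : 0 < R) (f : ℝ × ℝ → ℝ) (hfc : Continuous f)
    {C : ℝ} (hC0 : 0 ≤ C) (hC : ∀ x, |f x| ≤ C)
    (hvan : ∀ x : ℝ × ℝ, R ^ 2 ≤ x.1 ^ 2 + x.2 ^ 2 → f x = 0)
    (n : ℤ) (ψ : ℝ) (hψ1 : 0 < ψ) (hψ2 : ψ < π / 2) :
    VlineCoeff R μ f n ψ = (∫ r in Set.Ioi (0:ℝ),
      ((2 * Real.cos (n * cAng R ψ r) * Real.exp (-μ * r) : ℝ) : ℂ)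
        * angCoeff f n (rho2 R ψ r)) ∧
    IntegrableOn (fun r : ℝ =>
      ((2 * Real.cos (n * cAng R ψ r) * Real.exp (-μ * r) : ℝ) : ℂ)
        * angCoeff f n (rho2 R ψ r)) (Set.Ioi (0:ℝ)) := by
  have h2π : (0:ℝ) ≤ 2*π := by positivity
  have hπ : (π:ℂ) ≠ 0 := by exact_mod_cast Real.pi_ne_zero
  set F₁ : ℝ × ℝ → ℂ := fun p =>
    ((f (R • Phi p.1 - p.2 • Phi (p.1 - ψ)) * Real.exp (-μ * p.2) : ℝ) : ℂ)
      * Complex.exp (-Complex.I * n * p.1) with hF₁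
  set F₂ : ℝ × ℝ → ℂ := fun p =>
    ((f (R • Phi p.1 - p.2 • Phi (p.1 + ψ)) * Real.exp (-μ * p.2) : ℝ) : ℂ)
      * Complex.exp (-Complex.I * n * p.1) with hF₂
  have hint1 : Integrable F₁
      ((volume.restrict (Set.Ioc 0 (2*π))).prod (volume.restrict (Set.Ioi 0))) :=
    F_integrable R μ hR f hfc hC0 hC hvan n ψ
  have hint2 : Integrable F₂
      ((volume.restrict (Set.Ioc 0 (2*π))).prod (volume.restrict (Set.Ioi 0))) := by
    have := F_integrable R μ hR f hfc hC0 hC hvan n (-ψ)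
    simpa [hF₂, sub_neg_eq_add] using this
  have stepA : (fun φ : ℝ => ((Vline R μ f φ ψ : ℝ) : ℂ) * Complex.exp (-Complex.I * n * φ))
      = fun φ : ℝ => (∫ r in Set.Ioi (0:ℝ), F₁ (φ, r)) + (∫ r in Set.Ioi (0:ℝ), F₂ (φ, r)) := by
    funext φ
    rw [Vline, Complex.ofReal_add, add_mul]
    congr 1
    · simp only [hF₁]; rw [integral_mul_const]; congr 1; exact integral_ofReal.symm
    · simp only [hF₂]; rw [integral_mul_const]; congr 1; exact integral_ofReal.symm
  have stepE : (fun r : ℝ => (∫ φ in Set.Ioc (0:ℝ) (2*π), F₁ (φ, r))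
        + (∫ φ in Set.Ioc (0:ℝ) (2*π), F₂ (φ, r)))
      = fun r : ℝ => (2 * (π : ℂ)) *
        (((2 * Real.cos (n * cAng R ψ r) * Real.exp (-μ * r) : ℝ) : ℂ)
          * angCoeff f n (rho2 R ψ r)) := by
    funext r
    have e1 : (∫ φ in Set.Ioc (0:ℝ) (2*π), F₁ (φ, r))
        = Complex.exp (Complex.I*n*(cAng R ψ r)) * (2*π*angCoeff f n (rho2 R ψ r))
            * ((Real.exp (-μ*r) : ℝ) : ℂ) := by
      exact inner_eval f n R μ ψ r (rho2 R ψ r) (cAng R ψ r)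
        (fun φ => point_eq_pos R ψ r φ hR hψ1 hψ2)
    have e2 : (∫ φ in Set.Ioc (0:ℝ) (2*π), F₂ (φ, r))
        = Complex.exp (Complex.I*n*(-cAng R ψ r)) * (2*π*angCoeff f n (rho2 R ψ r))
            * ((Real.exp (-μ*r) : ℝ) : ℂ) := by
      have := inner_eval f n R μ (-ψ) r (rho2 R ψ r) (-cAng R ψ r)
        (fun φ => by simpa [sub_neg_eq_add] using point_eq_neg R ψ r φ hR hψ1 hψ2)
      simpa [hF₂, sub_neg_eq_add] using this
    rw [mul_neg] at e2
    rw [e1, e2]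
    have heuler : Complex.exp (Complex.I*(n:ℂ)*((cAng R ψ r : ℝ):ℂ))
        + Complex.exp (-(Complex.I*(n:ℂ)*((cAng R ψ r : ℝ):ℂ)))
        = ((2 * Real.cos ((n:ℝ) * cAng R ψ r) : ℝ) : ℂ) := by
      rw [show (Complex.I*(n:ℂ)*((cAng R ψ r : ℝ):ℂ)) = (((n:ℝ) * cAng R ψ r : ℝ):ℂ) * Complex.I
        by push_cast; ring]
      rw [← neg_mul, Complex.exp_mul_I, Complex.exp_mul_I, Complex.cos_neg, Complex.sin_neg]
      push_cast
      ring
    rw [← add_mul, ← add_mul, heuler]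
    push_cast
    ring
  have hmarg : Integrable (fun r : ℝ => (∫ φ in Set.Ioc (0:ℝ) (2*π), F₁ (φ, r))
        + (∫ φ in Set.Ioc (0:ℝ) (2*π), F₂ (φ, r))) (volume.restrict (Set.Ioi 0)) :=
    (hint1.integral_prod_right).add (hint2.integral_prod_right)
  constructor
  · rw [VlineCoeff, intervalIntegral.integral_of_le h2π, stepA]
    rw [integral_add (hint1.integral_prod_left) (hint2.integral_prod_left)]
    rw [integral_integral_swap (f := fun φ r => F₁ (φ, r)) (by exact hint1),
      integral_integral_swap (f := fun φ r => F₂ (φ, r)) (by exact hint2)]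
    rw [← integral_add (hint1.integral_prod_right) (hint2.integral_prod_right)]
    rw [stepE, integral_const_mul]
    field_simp
  · refine Integrable.congr (hmarg.const_mul (1/(2*(π:ℂ)))) (ae_of_all _ fun r => ?_)
    beta_reduce
    have := congrFun stepE r
    beta_reduce at this
    rw [this]
    field_simp


lemma ang_zero (R : ℝ) (hR : 0 < R) (f : ℝ × ℝ → ℝ)
    (hvan : ∀ x : ℝ × ℝ, R ^ 2 ≤ x.1 ^ 2 + x.2 ^ 2 → f x = 0) (n : ℤ)
    {x : ℝ} (hx : R ≤ x) : angCoeff f n x = 0 := by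
  rw [angCoeff]
  have hz : ∀ φ : ℝ, (f (x • Phi φ) : ℂ) * Complex.exp (-Complex.I*n*φ) = 0 := by
    intro φ
    have h0 : f (x • Phi φ) = 0 := by
      apply hvan
      simp only [Phi, Prod.smul_fst, Prod.smul_snd, smul_eq_mul]
      have hxsq : (x * Real.cos φ)^2 + (x * Real.sin φ)^2 = x^2 := by
        linear_combination x^2 * Real.sin_sq_add_cos_sq φ
      rw [hxsq]
      nlinarith
    rw [h0]
    simp
  rw [intervalIntegral.integral_congr (g := fun _ => (0:ℂ)) (fun φ _ => hz φ)]
  simp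

lemma rho2_hasDeriv (R ψ r : ℝ) (hs : 0 < R * Real.sin ψ) :
    HasDerivAt (rho2 R ψ) ((r - R * Real.cos ψ) / rho2 R ψ r) r := by
  have hpos : (0:ℝ) < (r - R * Real.cos ψ)^2 + (R * Real.sin ψ)^2 := by positivity
  have hu : HasDerivAt (fun t : ℝ => (t - R * Real.cos ψ)^2 + (R * Real.sin ψ)^2)
      (2 * (r - R * Real.cos ψ)) r := by
    have h1 : HasDerivAt (fun t : ℝ => t - R * Real.cos ψ) 1 r := (hasDerivAt_id r).sub_const _
    have h2 := (h1.pow 2).add_const ((R * Real.sin ψ)^2)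
    refine h2.congr_deriv ?_
    simp
  have h3 := (Real.hasDerivAt_sqrt hpos.ne').comp r hu
  have hρpos : 0 < rho2 R ψ r := rho2_pos R ψ r hs
  have hρne : rho2 R ψ r ≠ 0 := hρpos.ne'
  refine h3.congr_deriv ?_
  rw [rho2] at hρne ⊢
  field_simp

lemma rho2_injOn_left (R ψ : ℝ) :
    Set.InjOn (rho2 R ψ) (Set.Ioo 0 (R * Real.cos ψ)) := by
  intro a ha b hb h
  have h2 : (a - R * Real.cos ψ)^2 + (R * Real.sin ψ)^2
      = (b - R * Real.cos ψ)^2 + (R * Real.sin ψ)^2 := by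
    have := (Real.sqrt_inj (by positivity) (by positivity)).1 h
    exact this
  nlinarith [ha.2, hb.2, ha.1, hb.1]

lemma rho2_injOn_right (R ψ : ℝ) :
    Set.InjOn (rho2 R ψ) (Set.Ioo (R * Real.cos ψ) (2 * (R * Real.cos ψ))) := by
  intro a ha b hb h
  have h2 : (a - R * Real.cos ψ)^2 + (R * Real.sin ψ)^2
      = (b - R * Real.cos ψ)^2 + (R * Real.sin ψ)^2 :=
    (Real.sqrt_inj (by positivity) (by positivity)).1 h
  nlinarith [ha.1, hb.1]

lemma Rsq_eq (R ψ : ℝ) : (R * Real.cos ψ)^2 + (R * Real.sin ψ)^2 = R^2 := by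
  nlinarith [Real.sin_sq_add_cos_sq ψ]

lemma rho2_image_left (R ψ : ℝ) (hR : 0 < R) (hsin : 0 < Real.sin ψ) (hcos : 0 < Real.cos ψ) :
    rho2 R ψ '' Set.Ioo 0 (R * Real.cos ψ) = Set.Ioo (R * Real.sin ψ) R := by
  have hs : 0 < R * Real.sin ψ := by positivity
  have hκ : 0 < R * Real.cos ψ := by positivity
  ext x
  constructor
  · rintro ⟨r, ⟨hr1, hr2⟩, rfl⟩
    constructor
    · rw [show R * Real.sin ψ = Real.sqrt ((R * Real.sin ψ)^2) from (Real.sqrt_sq hs.le).symm,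
        rho2]
      apply Real.sqrt_lt_sqrt (by positivity)
      nlinarith
    · rw [rho2, Real.sqrt_lt' hR]
      nlinarith [Rsq_eq R ψ]
  · rintro ⟨hx1, hx2⟩
    have hx0 : 0 < x := lt_trans hs hx1
    have ht0 : 0 < x^2 - (R * Real.sin ψ)^2 := by nlinarith
    set t := Real.sqrt (x^2 - (R * Real.sin ψ)^2) with htdef
    have htpos : 0 < t := Real.sqrt_pos.2 ht0
    have htsq : t^2 = x^2 - (R * Real.sin ψ)^2 := Real.sq_sqrt ht0.le
    have htlt : t < R * Real.cos ψ := by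
      rw [htdef, Real.sqrt_lt' hκ]
      nlinarith [Rsq_eq R ψ]
    refine ⟨R * Real.cos ψ - t, ⟨by linarith, by linarith⟩, ?_⟩
    rw [rho2, show (R * Real.cos ψ - t - R * Real.cos ψ)^2 + (R * Real.sin ψ)^2
        = t^2 + (R * Real.sin ψ)^2 by ring, htsq,
      show x^2 - (R * Real.sin ψ)^2 + (R * Real.sin ψ)^2 = x^2 by ring, Real.sqrt_sq hx0.le]

lemma rho2_image_right (R ψ : ℝ) (hR : 0 < R) (hsin : 0 < Real.sin ψ) (hcos : 0 < Real.cos ψ) :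
    rho2 R ψ '' Set.Ioo (R * Real.cos ψ) (2 * (R * Real.cos ψ)) = Set.Ioo (R * Real.sin ψ) R := by
  have hs : 0 < R * Real.sin ψ := by positivity
  have hκ : 0 < R * Real.cos ψ := by positivity
  ext x
  constructor
  · rintro ⟨r, ⟨hr1, hr2⟩, rfl⟩
    constructor
    · rw [show R * Real.sin ψ = Real.sqrt ((R * Real.sin ψ)^2) from (Real.sqrt_sq hs.le).symm,
        rho2]
      apply Real.sqrt_lt_sqrt (by positivity)
      nlinarith
    · rw [rho2, Real.sqrt_lt' hR]
      nlinarith [Rsq_eq R ψ]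
  · rintro ⟨hx1, hx2⟩
    have hx0 : 0 < x := lt_trans hs hx1
    have ht0 : 0 < x^2 - (R * Real.sin ψ)^2 := by nlinarith
    set t := Real.sqrt (x^2 - (R * Real.sin ψ)^2) with htdef
    have htpos : 0 < t := Real.sqrt_pos.2 ht0
    have htsq : t^2 = x^2 - (R * Real.sin ψ)^2 := Real.sq_sqrt ht0.le
    have htlt : t < R * Real.cos ψ := by
      rw [htdef, Real.sqrt_lt' hκ]
      nlinarith [Rsq_eq R ψ]
    refine ⟨R * Real.cos ψ + t, ⟨by linarith, by linarith⟩, ?_⟩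
    rw [rho2, show (R * Real.cos ψ + t - R * Real.cos ψ)^2 + (R * Real.sin ψ)^2
        = t^2 + (R * Real.sin ψ)^2 by ring, htsq,
      show x^2 - (R * Real.sin ψ)^2 + (R * Real.sin ψ)^2 = x^2 by ring, Real.sqrt_sq hx0.le]


theorem VlineCoeff_eq_abel
    (R μ : ℝ) (hR : 0 < R) (f : ℝ × ℝ → ℝ)
    (hf : ContDiff ℝ (⊤ : ℕ∞) f) (hsupp : tsupport f ⊆ {x : ℝ × ℝ | x.1 ^ 2 + x.2 ^ 2 < R ^ 2})
    (n : ℤ) (ψ : ℝ) (hψ : ψ ∈ Set.Ioo 0 (π / 2)) :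
    VlineCoeff R μ f n ψ =
      2 * (Real.exp (-μ * R * Real.cos ψ) : ℂ) *
        ∫ r in (R * Real.sin ψ)..R,
          angCoeff f n r *
            ((r * Kker R μ n (R * Real.sin ψ) r /
                Real.sqrt (r ^ 2 - R ^ 2 * Real.sin ψ ^ 2) : ℝ) : ℂ) := by
  obtain ⟨hψ1, hψ2⟩ := hψ
  have hfc : Continuous f := hf.continuous
  obtain ⟨C, hC0, hC⟩ := f_bound hR hfc hsupp
  have hvan : ∀ x : ℝ × ℝ, R ^ 2 ≤ x.1 ^ 2 + x.2 ^ 2 → f x = 0 := fun x hx => f_vanish hsupp hx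
  have hsin : 0 < Real.sin ψ := Real.sin_pos_of_pos_of_lt_pi hψ1 (by linarith [Real.pi_gt_three])
  have hcos : 0 < Real.cos ψ := Real.cos_pos_of_mem_Ioo ⟨by linarith, hψ2⟩
  have hs : 0 < R * Real.sin ψ := by positivity
  have hκ : 0 < R * Real.cos ψ := by positivity
  have hsin1 : Real.sin ψ < 1 := by
    nlinarith [Real.sin_sq_add_cos_sq ψ, mul_pos hcos hcos]
  have hsR : R * Real.sin ψ < R := by nlinarith
  obtain ⟨hrepr, hGint⟩ := Vline_repr R μ hR f hfc hC0 hC hvan n ψ hψ1 hψ2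
  rw [hrepr]
  set g₁ : ℝ → ℂ := fun x =>
    ((2 * Real.cos (n * (Real.arcsin ((R * Real.sin ψ) / x) - ψ))
      * Real.exp (-μ * (R * Real.cos ψ - Real.sqrt (x^2 - (R * Real.sin ψ)^2)))
      * (x / Real.sqrt (x^2 - (R * Real.sin ψ)^2)) : ℝ) : ℂ) * angCoeff f n x with hg₁
  set g₂ : ℝ → ℂ := fun x =>
    ((2 * Real.cos (n * (π - Real.arcsin ((R * Real.sin ψ) / x) - ψ))
      * Real.exp (-μ * (R * Real.cos ψ + Real.sqrt (x^2 - (R * Real.sin ψ)^2)))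
      * (x / Real.sqrt (x^2 - (R * Real.sin ψ)^2)) : ℝ) : ℂ) * angCoeff f n x with hg₂
  have hderiv : ∀ (S : Set ℝ), ∀ r ∈ S,
      HasDerivWithinAt (rho2 R ψ) ((r - R * Real.cos ψ) / rho2 R ψ r) S r :=
    fun S r _ => (rho2_hasDeriv R ψ r hs).hasDerivWithinAt
  -- pointwise identities
  have hpt1 : ∀ r ∈ Set.Ioo (0:ℝ) (R * Real.cos ψ),
      |(r - R * Real.cos ψ) / rho2 R ψ r| • g₁ (rho2 R ψ r)
        = ((2 * Real.cos (n * cAng R ψ r) * Real.exp (-μ * r) : ℝ) : ℂ)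
            * angCoeff f n (rho2 R ψ r) := by
    intro r hr
    have hρpos : 0 < rho2 R ψ r := rho2_pos R ψ r hs
    have hsq : Real.sqrt ((rho2 R ψ r)^2 - (R * Real.sin ψ)^2) = R * Real.cos ψ - r := by
      rw [sqrt_rho2_sq_sub, abs_sub_comm, abs_of_pos (by linarith [hr.2])]
    have hcA : cAng R ψ r = Real.arcsin ((R * Real.sin ψ) / rho2 R ψ r) - ψ := if_pos hr.2.le
    simp only [hg₁]
    rw [hsq, hcA, Complex.real_smul, ← mul_assoc, ← Complex.ofReal_mul]
    congr 2
    rw [abs_div, abs_of_pos hρpos, abs_sub_comm, abs_of_pos (by linarith [hr.2]),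
      show R * Real.cos ψ - (R * Real.cos ψ - r) = r by ring]
    have hκr : (0:ℝ) < R * Real.cos ψ - r := by linarith [hr.2]
    field_simp
  have hpt2 : ∀ r ∈ Set.Ioo (R * Real.cos ψ) (2 * (R * Real.cos ψ)),
      |(r - R * Real.cos ψ) / rho2 R ψ r| • g₂ (rho2 R ψ r)
        = ((2 * Real.cos (n * cAng R ψ r) * Real.exp (-μ * r) : ℝ) : ℂ)
            * angCoeff f n (rho2 R ψ r) := by
    intro r hr
    have hρpos : 0 < rho2 R ψ r := rho2_pos R ψ r hs
    have hsq : Real.sqrt ((rho2 R ψ r)^2 - (R * Real.sin ψ)^2) = r - R * Real.cos ψ := by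
      rw [sqrt_rho2_sq_sub, abs_of_pos (by linarith [hr.1])]
    have hcA : cAng R ψ r = π - Real.arcsin ((R * Real.sin ψ) / rho2 R ψ r) - ψ :=
      if_neg (not_le.2 hr.1)
    simp only [hg₂]
    rw [hsq, hcA, Complex.real_smul, ← mul_assoc, ← Complex.ofReal_mul]
    congr 2
    rw [abs_div, abs_of_pos hρpos, abs_of_pos (by linarith [hr.1]),
      show R * Real.cos ψ + (r - R * Real.cos ψ) = r by ring]
    have hκr : (0:ℝ) < r - R * Real.cos ψ := by linarith [hr.1]
    field_simp
  -- substitutions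
  have hI1 : (∫ r in Set.Ioo (0:ℝ) (R * Real.cos ψ),
        ((2 * Real.cos (n * cAng R ψ r) * Real.exp (-μ * r) : ℝ) : ℂ)
          * angCoeff f n (rho2 R ψ r))
      = ∫ x in Set.Ioo (R * Real.sin ψ) R, g₁ x := by
    rw [← rho2_image_left R ψ hR hsin hcos,
      integral_image_eq_integral_abs_deriv_smul measurableSet_Ioo (hderiv _)
        (rho2_injOn_left R ψ) g₁]
    exact setIntegral_congr_fun measurableSet_Ioo (fun r hr => (hpt1 r hr).symm)
  have hI2 : (∫ r in Set.Ioo (R * Real.cos ψ) (2 * (R * Real.cos ψ)),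
        ((2 * Real.cos (n * cAng R ψ r) * Real.exp (-μ * r) : ℝ) : ℂ)
          * angCoeff f n (rho2 R ψ r))
      = ∫ x in Set.Ioo (R * Real.sin ψ) R, g₂ x := by
    rw [← rho2_image_right R ψ hR hsin hcos,
      integral_image_eq_integral_abs_deriv_smul measurableSet_Ioo (hderiv _)
        (rho2_injOn_right R ψ) g₂]
    exact setIntegral_congr_fun measurableSet_Ioo (fun r hr => (hpt2 r hr).symm)
  -- integrability of the Abel integrands
  have hint1 : IntegrableOn g₁ (Set.Ioo (R * Real.sin ψ) R) := by
    rw [← rho2_image_left R ψ hR hsin hcos,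
      integrableOn_image_iff_integrableOn_abs_deriv_smul measurableSet_Ioo (hderiv _)
        (rho2_injOn_left R ψ)]
    exact (hGint.mono_set Set.Ioo_subset_Ioi_self).congr_fun
      (fun r hr => (hpt1 r hr).symm) measurableSet_Ioo
  have hint2 : IntegrableOn g₂ (Set.Ioo (R * Real.sin ψ) R) := by
    rw [← rho2_image_right R ψ hR hsin hcos,
      integrableOn_image_iff_integrableOn_abs_deriv_smul measurableSet_Ioo (hderiv _)
        (rho2_injOn_right R ψ)]
    refine (hGint.mono_set ?_).congr_fun (fun r hr => (hpt2 r hr).symm) measurableSet_Ioo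
    exact fun x hx => lt_trans hκ hx.1
  -- the splitting of the half-line integral
  have hzero : ∀ r ∈ Set.Ioi (2 * (R * Real.cos ψ)),
      ((2 * Real.cos (n * cAng R ψ r) * Real.exp (-μ * r) : ℝ) : ℂ)
        * angCoeff f n (rho2 R ψ r) = 0 := by
    intro r hr
    simp only [Set.mem_Ioi] at hr
    have hRle : R ≤ rho2 R ψ r := by
      have h1 : R = Real.sqrt ((R * Real.cos ψ)^2 + (R * Real.sin ψ)^2) := by
        rw [Rsq_eq, Real.sqrt_sq hR.le]
      rw [rho2]
      nth_rewrite 1 [h1]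
      apply Real.sqrt_le_sqrt
      have hr0 : 0 < r := lt_trans (by positivity) hr
      nlinarith [mul_pos hr0 (show (0:ℝ) < r - 2 * (R * Real.cos ψ) by linarith)]
    rw [ang_zero R hR f hvan n hRle, mul_zero]
  have hsplit : (∫ r in Set.Ioi (0:ℝ),
        ((2 * Real.cos (n * cAng R ψ r) * Real.exp (-μ * r) : ℝ) : ℂ)
          * angCoeff f n (rho2 R ψ r))
      = (∫ r in Set.Ioo (0:ℝ) (R * Real.cos ψ),
          ((2 * Real.cos (n * cAng R ψ r) * Real.exp (-μ * r) : ℝ) : ℂ)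
            * angCoeff f n (rho2 R ψ r))
        + ∫ r in Set.Ioo (R * Real.cos ψ) (2 * (R * Real.cos ψ)),
            ((2 * Real.cos (n * cAng R ψ r) * Real.exp (-μ * r) : ℝ) : ℂ)
              * angCoeff f n (rho2 R ψ r) := by
    rw [← Set.Ioc_union_Ioi_eq_Ioi (show (0:ℝ) ≤ 2 * (R * Real.cos ψ) by positivity),
      setIntegral_union (Set.Ioc_disjoint_Ioi le_rfl) measurableSet_Ioi
        (hGint.mono_set Set.Ioc_subset_Ioi_self)
        (hGint.mono_set (Set.Ioi_subset_Ioi (by positivity))),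
      setIntegral_eq_zero_of_forall_eq_zero hzero, add_zero,
      ← Set.Ioc_union_Ioc_eq_Ioc hκ.le (show R * Real.cos ψ ≤ 2 * (R * Real.cos ψ) by linarith),
      setIntegral_union (Set.Ioc_disjoint_Ioc_of_le le_rfl) measurableSet_Ioc
        (hGint.mono_set Set.Ioc_subset_Ioi_self)
        (hGint.mono_set (fun x hx => lt_trans hκ hx.1)),
      integral_Ioc_eq_integral_Ioo, integral_Ioc_eq_integral_Ioo]
  rw [hsplit, hI1, hI2, ← integral_add hint1 hint2]
  rw [intervalIntegral.integral_of_le hsR.le, integral_Ioc_eq_integral_Ioo,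
    ← integral_const_mul]
  apply setIntegral_congr_fun measurableSet_Ioo
  intro x hx
  obtain ⟨hx1, hx2⟩ := hx
  have hx0 : 0 < x := lt_trans hs hx1
  have ht0 : 0 < x^2 - (R * Real.sin ψ)^2 := by nlinarith
  have htpos : 0 < Real.sqrt (x^2 - (R * Real.sin ψ)^2) := Real.sqrt_pos.2 ht0
  have harc : Real.arcsin ((R * Real.sin ψ) / R) = ψ := by
    rw [mul_comm, mul_div_assoc, div_self hR.ne', mul_one]
    exact Real.arcsin_sin (by linarith [Real.pi_pos]) (by linarith)
  simp only [hg₁, hg₂]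
  rw [Kker, Finset.sum_pair (show (1:ℝ) ≠ -1 by norm_num)]
  rw [show x^2 - R^2 * Real.sin ψ^2 = x^2 - (R * Real.sin ψ)^2 by ring]
  rw [harc, one_zpow]
  simp only [one_mul, neg_one_mul, sub_neg_eq_add]
  rw [show (n:ℝ) * (π - Real.arcsin ((R * Real.sin ψ) / x) - ψ)
      = (n:ℝ) * π - (n:ℝ) * (Real.arcsin ((R * Real.sin ψ) / x) + ψ) by ring,
    Real.cos_int_mul_pi_sub]
  rw [show -μ * (R * Real.cos ψ - Real.sqrt (x^2 - (R * Real.sin ψ)^2))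
      = -μ * R * Real.cos ψ + μ * Real.sqrt (x^2 - (R * Real.sin ψ)^2) by ring,
    Real.exp_add,
    show -μ * (R * Real.cos ψ + Real.sqrt (x^2 - (R * Real.sin ψ)^2))
      = -μ * R * Real.cos ψ + -(μ * Real.sqrt (x^2 - (R * Real.sin ψ)^2)) by ring,
    Real.exp_add]
  generalize ((-1:ℝ)) ^ n = w
  push_cast
  ring
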